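/- arXiv:2305.16549 — 7 statements merged into one kernel-verified Lean document; each statement's English description precedes it below -/
import Mathlib

section
/- Let a₁, a₂, a₃, a₄, a₅ > 0 be real constants and let p ∈ (2,5). Define h : [0,∞) → ℝ by h(t) = a₁t³ + a₂t⁵ + a₃t⁶ − a₄t^(p+4) − a₅t⁹. Then h has a unique positive critical point t₀, i.e. there is exactly one t₀ > 0 with h'(t₀) = 0, and this critical point is the strict global maximum of h on [0,∞): h(t) < h(t₀) for every t ≥ 0 with t ≠ t₀. (Lemma 2.3) -/
/-- Lemma 2.3: the fiber polynomial
`h(t) = a₁t³ + a₂t⁵ + a₃t⁶ − a₄t^(p+4) − a₅t⁹` with positive coefficients and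
`p ∈ (2,5)` has a unique positive critical point `t₀`, which is the strict
global maximum of `h` on `[0,∞)`. -/
theorem fiber_polynomial_unique_critical_point_max
    (a₁ a₂ a₃ a₄ a₅ p : ℝ)
    (ha₁ : 0 < a₁) (ha₂ : 0 < a₂) (ha₃ : 0 < a₃) (ha₄ : 0 < a₄) (ha₅ : 0 < a₅)
    (hp₁ : 2 < p) (hp₂ : p < 5)
    (h : ℝ → ℝ)
    (hh : ∀ t : ℝ, 0 ≤ t →
      h t = a₁ * t ^ 3 + a₂ * t ^ 5 + a₃ * t ^ 6 - a₄ * t ^ (p + 4) - a₅ * t ^ 9) :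
    ∃ t₀ : ℝ, 0 < t₀ ∧ deriv h t₀ = 0 ∧
      (∀ t : ℝ, 0 < t → deriv h t = 0 → t = t₀) ∧
      (∀ t : ℝ, 0 ≤ t → t ≠ t₀ → h t < h t₀) := by
  set φ : ℝ → ℝ := fun t => 3 * a₁ * t ^ (-(p + 1)) + 5 * a₂ * t ^ (1 - p)
      + 6 * a₃ * t ^ (2 - p) - (p + 4) * a₄ - 9 * a₅ * t ^ (5 - p) with hφdef
  set H : ℝ → ℝ := fun t => a₁ * t ^ 3 + a₂ * t ^ 5 + a₃ * t ^ 6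
      - a₄ * t ^ (p + 4) - a₅ * t ^ 9 with hHdef
  -- h agrees with H near any t > 0 and on [0, ∞)
  have hev : ∀ t : ℝ, 0 < t → h =ᶠ[nhds t] H := by
    intro t ht
    filter_upwards [Ioi_mem_nhds ht] with x hx
    exact hh x (le_of_lt hx)
  -- derivative of h on (0, ∞)
  have hd : ∀ t : ℝ, 0 < t → HasDerivAt h (t ^ (p + 3) * φ t) t := by
    intro t ht
    have hH : HasDerivAt H
        (a₁ * ((3:ℕ) * t ^ (3 - 1)) + a₂ * ((5:ℕ) * t ^ (5 - 1))
          + a₃ * ((6:ℕ) * t ^ (6 - 1)) - a₄ * ((p + 4) * t ^ (p + 4 - 1))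
          - a₅ * ((9:ℕ) * t ^ (9 - 1))) t := by
      exact ((((hasDerivAt_pow 3 t).const_mul a₁).add
        ((hasDerivAt_pow 5 t).const_mul a₂)).add
        ((hasDerivAt_pow 6 t).const_mul a₃)).sub
        ((Real.hasDerivAt_rpow_const (Or.inl (ne_of_gt ht))).const_mul a₄) |>.sub
        ((hasDerivAt_pow 9 t).const_mul a₅)
    have e1 : t ^ (p + 3) * t ^ (-(p + 1)) = t ^ (2:ℕ) := by
      rw [← Real.rpow_natCast t 2, ← Real.rpow_add ht]; congr 1; push_cast; ring
    have e2 : t ^ (p + 3) * t ^ (1 - p) = t ^ (4:ℕ) := by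
      rw [← Real.rpow_natCast t 4, ← Real.rpow_add ht]; congr 1; push_cast; ring
    have e3 : t ^ (p + 3) * t ^ (2 - p) = t ^ (5:ℕ) := by
      rw [← Real.rpow_natCast t 5, ← Real.rpow_add ht]; congr 1; push_cast; ring
    have e5 : t ^ (p + 3) * t ^ (5 - p) = t ^ (8:ℕ) := by
      rw [← Real.rpow_natCast t 8, ← Real.rpow_add ht]; congr 1; push_cast; ring
    have e4 : t ^ (p + 4 - 1) = t ^ (p + 3) := by congr 1; ring
    have heval : a₁ * ((3:ℕ) * t ^ (3 - 1)) + a₂ * ((5:ℕ) * t ^ (5 - 1))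
          + a₃ * ((6:ℕ) * t ^ (6 - 1)) - a₄ * ((p + 4) * t ^ (p + 4 - 1))
          - a₅ * ((9:ℕ) * t ^ (9 - 1)) = t ^ (p + 3) * φ t := by
      rw [hφdef, e4]
      have : t ^ (p + 3) * (3 * a₁ * t ^ (-(p + 1)) + 5 * a₂ * t ^ (1 - p)
          + 6 * a₃ * t ^ (2 - p) - (p + 4) * a₄ - 9 * a₅ * t ^ (5 - p))
          = 3 * a₁ * (t ^ (p + 3) * t ^ (-(p + 1)))
            + 5 * a₂ * (t ^ (p + 3) * t ^ (1 - p))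
            + 6 * a₃ * (t ^ (p + 3) * t ^ (2 - p))
            - (p + 4) * a₄ * t ^ (p + 3)
            - 9 * a₅ * (t ^ (p + 3) * t ^ (5 - p)) := by ring
      rw [this, e1, e2, e3, e5]
      push_cast
      ring
    exact (heval ▸ hH).congr_of_eventuallyEq (hev t ht)
  have hderiv : ∀ t : ℝ, 0 < t → deriv h t = t ^ (p + 3) * φ t :=
    fun t ht => (hd t ht).deriv
  -- φ is strictly decreasing on (0, ∞)
  have hanti : StrictAntiOn φ (Set.Ioi 0) := by
    intro x hx y hy hxy
    simp only [Set.mem_Ioi] at hx hy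
    have t1 : y ^ (-(p + 1)) < x ^ (-(p + 1)) :=
      Real.rpow_lt_rpow_of_neg hx hxy (by linarith)
    have t2 : y ^ (1 - p) < x ^ (1 - p) :=
      Real.rpow_lt_rpow_of_neg hx hxy (by linarith)
    have t3 : y ^ (2 - p) < x ^ (2 - p) :=
      Real.rpow_lt_rpow_of_neg hx hxy (by linarith)
    have t5 : x ^ (5 - p) < y ^ (5 - p) :=
      Real.rpow_lt_rpow (le_of_lt hx) hxy (by linarith)
    simp only [hφdef]
    nlinarith [mul_lt_mul_of_pos_left t1 (by positivity : (0:ℝ) < 3 * a₁),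
      mul_lt_mul_of_pos_left t2 (by positivity : (0:ℝ) < 5 * a₂),
      mul_lt_mul_of_pos_left t3 (by positivity : (0:ℝ) < 6 * a₃),
      mul_lt_mul_of_pos_left t5 (by positivity : (0:ℝ) < 9 * a₅)]
  -- continuity of φ on (0, ∞)
  have hφc : ContinuousOn φ (Set.Ioi 0) := by
    intro x hx
    simp only [Set.mem_Ioi] at hx
    have h1 := Real.continuousAt_rpow_const x (-(p + 1)) (Or.inl (ne_of_gt hx))
    have h2 := Real.continuousAt_rpow_const x (1 - p) (Or.inl (ne_of_gt hx))
    have h3 := Real.continuousAt_rpow_const x (2 - p) (Or.inl (ne_of_gt hx))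
    have h5 := Real.continuousAt_rpow_const x (5 - p) (Or.inl (ne_of_gt hx))
    exact ((((continuousAt_const.mul h1).add (continuousAt_const.mul h2)).add
      (continuousAt_const.mul h3)).sub continuousAt_const).sub
      (continuousAt_const.mul h5) |>.continuousWithinAt
  -- explicit points where φ is positive / negative
  set K' : ℝ := ((p + 4) * a₄ + 9 * a₅ + 1) / (3 * a₁) + 1 with hK'def
  have hK'1 : 1 ≤ K' := by
    have h0 : 0 < ((p + 4) * a₄ + 9 * a₅ + 1) / (3 * a₁) := by positivity
    rw [hK'def]; linarith
  set a : ℝ := K' ^ (-(p + 1)⁻¹) with hadef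
  have ha0 : 0 < a := Real.rpow_pos_of_pos (by linarith) _
  have ha1 : a ≤ 1 := Real.rpow_le_one_of_one_le_of_nonpos hK'1
    (by rw [neg_nonpos]; exact inv_nonneg.2 (by linarith))
  have haval : a ^ (-(p + 1)) = K' := by
    rw [hadef, ← Real.rpow_mul (by linarith : (0:ℝ) ≤ K')]
    rw [show -(p + 1)⁻¹ * -(p + 1) = 1 by
      rw [neg_mul_neg, inv_mul_cancel₀ (by linarith : p + 1 ≠ 0)]]
    exact Real.rpow_one K'
  have hφa : 0 < φ a := by
    have m2 : 0 ≤ 5 * a₂ * a ^ (1 - p) := by positivity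
    have m3 : 0 ≤ 6 * a₃ * a ^ (2 - p) := by positivity
    have m5 : a ^ (5 - p) ≤ 1 := Real.rpow_le_one (le_of_lt ha0) ha1 (by linarith)
    have key : 3 * a₁ * K' = (p + 4) * a₄ + 9 * a₅ + 1 + 3 * a₁ := by
      rw [hK'def]; field_simp
    have : 3 * a₁ * a ^ (-(p + 1)) = (p + 4) * a₄ + 9 * a₅ + 1 + 3 * a₁ := by
      rw [haval]; exact key
    simp only [hφdef]
    nlinarith [mul_le_mul_of_nonneg_left m5 (by positivity : (0:ℝ) ≤ 9 * a₅)]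
  set K : ℝ := (3 * a₁ + 5 * a₂ + 6 * a₃ + 1) / (9 * a₅) + 1 with hKdef
  have hK1 : 1 ≤ K := by
    have h0 : 0 < (3 * a₁ + 5 * a₂ + 6 * a₃ + 1) / (9 * a₅) := by positivity
    rw [hKdef]; linarith
  set b : ℝ := K ^ ((5 - p)⁻¹) with hbdef
  have hb1 : 1 ≤ b := by
    calc (1:ℝ) = 1 ^ ((5 - p)⁻¹) := (Real.one_rpow _).symm
    _ ≤ K ^ ((5 - p)⁻¹) := Real.rpow_le_rpow zero_le_one hK1 (inv_nonneg.2 (by linarith))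
  have hb0 : 0 < b := lt_of_lt_of_le one_pos hb1
  have hbval : b ^ (5 - p) = K := by
    rw [hbdef, ← Real.rpow_mul (by linarith : (0:ℝ) ≤ K)]
    rw [inv_mul_cancel₀ (by linarith : (5:ℝ) - p ≠ 0)]
    exact Real.rpow_one K
  have hφb : φ b < 0 := by
    have m1 : b ^ (-(p + 1)) ≤ 1 :=
      Real.rpow_le_one_of_one_le_of_nonpos hb1 (by linarith)
    have m2 : b ^ (1 - p) ≤ 1 :=
      Real.rpow_le_one_of_one_le_of_nonpos hb1 (by linarith)
    have m3 : b ^ (2 - p) ≤ 1 :=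
      Real.rpow_le_one_of_one_le_of_nonpos hb1 (by linarith)
    have key : 9 * a₅ * K = 3 * a₁ + 5 * a₂ + 6 * a₃ + 1 + 9 * a₅ := by
      rw [hKdef]; field_simp
    have : 9 * a₅ * b ^ (5 - p) = 3 * a₁ + 5 * a₂ + 6 * a₃ + 1 + 9 * a₅ := by
      rw [hbval]; exact key
    have hpa : 0 < (p + 4) * a₄ := by positivity
    simp only [hφdef]
    nlinarith [mul_le_mul_of_nonneg_left m1 (by positivity : (0:ℝ) ≤ 3 * a₁),
      mul_le_mul_of_nonneg_left m2 (by positivity : (0:ℝ) ≤ 5 * a₂),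
      mul_le_mul_of_nonneg_left m3 (by positivity : (0:ℝ) ≤ 6 * a₃)]
  have hab : a ≤ b := by
    by_contra hc
    push_neg at hc
    have := hanti (Set.mem_Ioi.2 hb0) (Set.mem_Ioi.2 ha0) hc
    linarith
  -- intermediate value: zero of φ
  have hsub : Set.Icc a b ⊆ Set.Ioi 0 := fun x hx => lt_of_lt_of_le ha0 hx.1
  obtain ⟨t₀, ht₀mem, ht₀⟩ := intermediate_value_Icc' hab (hφc.mono hsub)
    ⟨le_of_lt hφb, le_of_lt hφa⟩
  have ht₀pos : 0 < t₀ := lt_of_lt_of_le ha0 ht₀mem.1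
  -- sign of φ away from t₀
  have hposφ : ∀ t : ℝ, 0 < t → t < t₀ → 0 < φ t := by
    intro t ht htt
    have := hanti (Set.mem_Ioi.2 ht) (Set.mem_Ioi.2 ht₀pos) htt
    rw [ht₀] at this; linarith
  have hnegφ : ∀ t : ℝ, t₀ < t → φ t < 0 := by
    intro t htt
    have := hanti (Set.mem_Ioi.2 ht₀pos) (Set.mem_Ioi.2 (lt_trans ht₀pos htt)) htt
    rw [ht₀] at this; linarith
  -- continuity of h on [0, ∞)
  have hHcont : Continuous H := by
    rw [continuous_iff_continuousAt]
    intro x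
    have h4 := Real.continuousAt_rpow_const x (p + 4) (Or.inr (by linarith))
    exact ((((continuousAt_const.mul (continuousAt_pow x 3)).add
      (continuousAt_const.mul (continuousAt_pow x 5))).add
      (continuousAt_const.mul (continuousAt_pow x 6))).sub
      (continuousAt_const.mul h4)).sub (continuousAt_const.mul (continuousAt_pow x 9))
  have hhcont : ContinuousOn h (Set.Ici 0) :=
    hHcont.continuousOn.congr fun x hx => hh x hx
  -- monotone on [0, t₀], antitone on [t₀, ∞)
  have hmono : StrictMonoOn h (Set.Icc 0 t₀) := by
    apply strictMonoOn_of_deriv_pos (convex_Icc 0 t₀)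
      (hhcont.mono (fun x hx => hx.1))
    intro x hx
    rw [interior_Icc] at hx
    rw [hderiv x hx.1]
    exact mul_pos (Real.rpow_pos_of_pos hx.1 _) (hposφ x hx.1 hx.2)
  have hantiH : StrictAntiOn h (Set.Ici t₀) := by
    apply strictAntiOn_of_deriv_neg (convex_Ici t₀)
      (hhcont.mono (fun x hx => le_trans (le_of_lt ht₀pos) hx))
    intro x hx
    rw [interior_Ici] at hx
    rw [hderiv x (lt_trans ht₀pos hx)]
    exact mul_neg_of_pos_of_neg (Real.rpow_pos_of_pos (lt_trans ht₀pos hx) _)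
      (hnegφ x hx)
  refine ⟨t₀, ht₀pos, ?_, ?_, ?_⟩
  · rw [hderiv t₀ ht₀pos, ht₀, mul_zero]
  · intro t ht hdt
    rw [hderiv t ht] at hdt
    have hφt : φ t = 0 := by
      rcases mul_eq_zero.1 hdt with h' | h'
      · exact absurd h' (ne_of_gt (Real.rpow_pos_of_pos ht _))
      · exact h'
    exact hanti.injOn (Set.mem_Ioi.2 ht) (Set.mem_Ioi.2 ht₀pos) (by rw [hφt, ht₀])
  · intro t ht hne
    rcases lt_or_gt_of_ne hne with hlt | hgt
    · exact hmono ⟨ht, le_of_lt hlt⟩ ⟨le_of_lt ht₀pos, le_refl _⟩ hlt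
    · exact hantiH (Set.mem_Ici.2 (le_refl _)) (Set.mem_Ici.2 (le_of_lt hgt)) hgt
end

section
/- Let a₁, a₂, a₃, a₄, a₅ > 0 be real constants and let p ∈ (2,5). Define h : [0,∞) → ℝ by h(t) = a₁t³ + a₂t⁵ + a₃t⁶ − a₄t^(p+4) − a₅t⁹. Then h has exactly one positive zero t* > 0; moreover h(t) > 0 for all t ∈ (0, t*) and h(t) < 0 for all t > t*. -/
/-- The fiber polynomial `h(t) = a₁t³ + a₂t⁵ + a₃t⁶ − a₄t^(p+4) − a₅t⁹` with
positive coefficients and `p ∈ (2,5)` has exactly one positive zero `t*`;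
moreover `h > 0` on `(0, t*)` and `h < 0` on `(t*, ∞)`. -/
theorem fiber_polynomial_unique_positive_zero
    (a₁ a₂ a₃ a₄ a₅ p : ℝ)
    (ha₁ : 0 < a₁) (ha₂ : 0 < a₂) (ha₃ : 0 < a₃) (ha₄ : 0 < a₄) (ha₅ : 0 < a₅)
    (hp₁ : 2 < p) (hp₂ : p < 5)
    (h : ℝ → ℝ)
    (hh : ∀ t : ℝ, 0 ≤ t →
      h t = a₁ * t ^ 3 + a₂ * t ^ 5 + a₃ * t ^ 6 - a₄ * t ^ (p + 4) - a₅ * t ^ 9) :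
    ∃ tstar : ℝ, 0 < tstar ∧ h tstar = 0 ∧
      (∀ t : ℝ, 0 < t → h t = 0 → t = tstar) ∧
      (∀ t : ℝ, 0 < t → t < tstar → 0 < h t) ∧
      (∀ t : ℝ, tstar < t → h t < 0) := by
  have h5p : 0 < 5 - p := by linarith
  have hp1 : 0 < p + 1 := by linarith
  set g : ℝ → ℝ := fun t =>
      a₁ * t ^ (-(p+1)) + a₂ * t ^ (1-p) + a₃ * t ^ (2-p) - a₄ - a₅ * t ^ (5-p) with hg
  -- key factorization
  have key : ∀ t : ℝ, 0 < t → h t = t ^ (p+4) * g t := by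
    intro t ht
    have e1 : t ^ (p+4) * t ^ (-(p+1)) = t ^ (3:ℕ) := by
      rw [← Real.rpow_add ht, show (p+4) + -(p+1) = ((3:ℕ):ℝ) by push_cast; ring,
        Real.rpow_natCast]
    have e2 : t ^ (p+4) * t ^ (1-p) = t ^ (5:ℕ) := by
      rw [← Real.rpow_add ht, show (p+4) + (1-p) = ((5:ℕ):ℝ) by push_cast; ring,
        Real.rpow_natCast]
    have e3 : t ^ (p+4) * t ^ (2-p) = t ^ (6:ℕ) := by
      rw [← Real.rpow_add ht, show (p+4) + (2-p) = ((6:ℕ):ℝ) by push_cast; ring,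
        Real.rpow_natCast]
    have e5 : t ^ (p+4) * t ^ (5-p) = t ^ (9:ℕ) := by
      rw [← Real.rpow_add ht, show (p+4) + (5-p) = ((9:ℕ):ℝ) by push_cast; ring,
        Real.rpow_natCast]
    rw [hh t ht.le, hg]
    push_cast at e1 e2 e3 e5
    linear_combination -a₁ * e1 - a₂ * e2 - a₃ * e3 + a₅ * e5
  -- strict antitonicity
  have hganti : StrictAntiOn g (Set.Ioi 0) := by
    intro x hx y hy hxy
    simp only [Set.mem_Ioi] at hx hy
    have l1 : y ^ (-(p+1)) < x ^ (-(p+1)) :=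
      Real.rpow_lt_rpow_of_neg hx hxy (by linarith)
    have l2 : y ^ (1-p) < x ^ (1-p) :=
      Real.rpow_lt_rpow_of_neg hx hxy (by linarith)
    have l3 : y ^ (2-p) < x ^ (2-p) :=
      Real.rpow_lt_rpow_of_neg hx hxy (by linarith)
    have l5 : x ^ (5-p) < y ^ (5-p) := Real.rpow_lt_rpow hx.le hxy h5p
    have m1 := mul_lt_mul_of_pos_left l1 ha₁
    have m2 := mul_lt_mul_of_pos_left l2 ha₂
    have m3 := mul_lt_mul_of_pos_left l3 ha₃
    have m5 := mul_lt_mul_of_pos_left l5 ha₅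
    simp only [hg]
    linarith
  -- witness t₀ with g t₀ > 0
  set c : ℝ := a₁ / (a₄ + a₅ + 1) with hc
  have hcpos : 0 < c := by positivity
  set t₀ : ℝ := min 1 (c ^ (p+1)⁻¹) with ht₀def
  have ht₀pos : 0 < t₀ := lt_min one_pos (Real.rpow_pos_of_pos hcpos _)
  have ht₀le1 : t₀ ≤ 1 := min_le_left _ _
  have hgt₀ : 0 < g t₀ := by
    have A : t₀ ^ (p+1) ≤ c := by
      calc t₀ ^ (p+1) ≤ (c ^ (p+1)⁻¹) ^ (p+1) :=
            Real.rpow_le_rpow ht₀pos.le (min_le_right _ _) hp1.le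
        _ = c := Real.rpow_inv_rpow hcpos.le hp1.ne'
    have hpow : 0 < t₀ ^ (p+1) := Real.rpow_pos_of_pos ht₀pos _
    have hinv : c⁻¹ ≤ (t₀ ^ (p+1))⁻¹ := by
      apply inv_anti₀ hpow A
    have hac : a₁ * c⁻¹ = a₄ + a₅ + 1 := by
      rw [hc]; field_simp
    have B : a₄ + a₅ + 1 ≤ a₁ * t₀ ^ (-(p+1)) := by
      rw [Real.rpow_neg ht₀pos.le, ← hac]
      exact mul_le_mul_of_nonneg_left hinv ha₁.le
    have C : a₅ * t₀ ^ (5-p) ≤ a₅ := by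
      have := Real.rpow_le_one ht₀pos.le ht₀le1 h5p.le
      nlinarith
    have P2 : 0 < a₂ * t₀ ^ (1-p) := by positivity
    have P3 : 0 < a₃ * t₀ ^ (2-p) := by positivity
    simp only [hg]
    linarith
  -- witness t₁ with g t₁ < 0
  set d : ℝ := (a₁ + a₂ + a₃ + 1) / a₅ with hd
  have hdpos : 0 < d := by positivity
  set t₁ : ℝ := max 1 (d ^ (5-p)⁻¹) with ht₁def
  have ht₁ge1 : (1:ℝ) ≤ t₁ := le_max_left _ _
  have ht₁pos : 0 < t₁ := lt_of_lt_of_le one_pos ht₁ge1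
  have hgt₁ : g t₁ < 0 := by
    have A : d ≤ t₁ ^ (5-p) := by
      calc d = (d ^ (5-p)⁻¹) ^ (5-p) := (Real.rpow_inv_rpow hdpos.le h5p.ne').symm
        _ ≤ t₁ ^ (5-p) := Real.rpow_le_rpow (by positivity) (le_max_right _ _) h5p.le
    have had : a₅ * d = a₁ + a₂ + a₃ + 1 := by
      rw [hd]; field_simp
    have B : a₁ + a₂ + a₃ + 1 ≤ a₅ * t₁ ^ (5-p) := by
      rw [← had]; exact mul_le_mul_of_nonneg_left A ha₅.le
    have C1 : a₁ * t₁ ^ (-(p+1)) ≤ a₁ := by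
      have := Real.rpow_le_one_of_one_le_of_nonpos ht₁ge1 (by linarith : -(p+1) ≤ 0)
      nlinarith
    have C2 : a₂ * t₁ ^ (1-p) ≤ a₂ := by
      have := Real.rpow_le_one_of_one_le_of_nonpos ht₁ge1 (by linarith : 1-p ≤ 0)
      nlinarith
    have C3 : a₃ * t₁ ^ (2-p) ≤ a₃ := by
      have := Real.rpow_le_one_of_one_le_of_nonpos ht₁ge1 (by linarith : 2-p ≤ 0)
      nlinarith
    simp only [hg]
    linarith
  have ht₀₁ : t₀ ≤ t₁ := le_trans ht₀le1 ht₁ge1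
  -- continuity of g on [t₀, t₁]
  have hgc : ContinuousOn g (Set.Icc t₀ t₁) := by
    have hne : ∀ x ∈ Set.Icc t₀ t₁, x ≠ 0 ∨ (0:ℝ) ≤ 0 := fun x hx =>
      Or.inl (ne_of_gt (lt_of_lt_of_le ht₀pos hx.1))
    have base : ∀ q : ℝ, ContinuousOn (fun x : ℝ => x ^ q) (Set.Icc t₀ t₁) := by
      intro q
      apply ContinuousOn.rpow_const continuousOn_id
      intro x hx
      exact Or.inl (ne_of_gt (lt_of_lt_of_le ht₀pos hx.1))
    simp only [hg]
    exact ((((continuousOn_const.mul (base _)).add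
      (continuousOn_const.mul (base _))).add
      (continuousOn_const.mul (base _))).sub continuousOn_const).sub
      (continuousOn_const.mul (base _))
  -- IVT
  obtain ⟨tstar, htsmem, hgts⟩ : ∃ tstar ∈ Set.Icc t₀ t₁, g tstar = 0 := by
    have h0 : (0:ℝ) ∈ Set.Icc (g t₁) (g t₀) := ⟨hgt₁.le, hgt₀.le⟩
    obtain ⟨ts, hts, hts0⟩ := intermediate_value_Icc' ht₀₁ hgc h0
    exact ⟨ts, hts, hts0⟩
  have htspos : 0 < tstar := lt_of_lt_of_le ht₀pos htsmem.1
  have htsI : tstar ∈ Set.Ioi (0:ℝ) := htspos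
  refine ⟨tstar, htspos, ?_, ?_, ?_, ?_⟩
  · rw [key tstar htspos, hgts, mul_zero]
  · intro t ht hht
    have : t ^ (p+4) * g t = 0 := by rw [← key t ht]; exact hht
    have hgt : g t = 0 := by
      have := Real.rpow_pos_of_pos ht (p+4)
      rcases mul_eq_zero.1 ‹t ^ (p+4) * g t = 0› with h' | h'
      · exact absurd h' this.ne'
      · exact h'
    exact hganti.injOn ht htsI (hgt.trans hgts.symm)
  · intro t ht htlt
    rw [key t ht]
    have : g tstar < g t := hganti ht htsI htlt
    rw [hgts] at this
    exact mul_pos (Real.rpow_pos_of_pos ht _) this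
  · intro t htgt
    have ht : 0 < t := lt_trans htspos htgt
    rw [key t ht]
    have : g t < g tstar := hganti htsI ht htgt
    rw [hgts] at this
    exact mul_neg_of_pos_of_neg (Real.rpow_pos_of_pos ht _) this
end

section
/- Fix a, b > 0 and p ∈ (2,5). Let u : ℝ³ → ℝ be smooth with compact support and not identically zero, and for t > 0 let u_t(x) = t·u(t⁻¹x). Then I(u_t) → −∞ as t → +∞; in particular, the functional I is not bounded from below on smooth compactly supported functions. (Lemma 2.2) -/
open MeasureTheory Filter

/-- The energy functional
`I(u) = (1/2)∫(a|∇u|² + u²) + (b/4)(∫|∇u|²)² − (1/(p+1))∫|u|^(p+1) − (1/6)∫|u|⁶`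
on `ℝ³`. -/
noncomputable def energyI (a b p : ℝ) (u : EuclideanSpace ℝ (Fin 3) → ℝ) : ℝ :=
  (1/2) * (∫ x : EuclideanSpace ℝ (Fin 3), (a * ‖gradient u x‖ ^ 2 + (u x) ^ 2))
    + (b/4) * (∫ x : EuclideanSpace ℝ (Fin 3), ‖gradient u x‖ ^ 2) ^ 2
    - (1/(p+1)) * (∫ x : EuclideanSpace ℝ (Fin 3), |u x| ^ (p+1))
    - (1/6) * (∫ x : EuclideanSpace ℝ (Fin 3), |u x| ^ (6:ℕ))

local notation "E3" => EuclideanSpace ℝ (Fin 3)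

lemma grad_scale (u : E3 → ℝ) (hu : ContDiff ℝ (⊤ : ℕ∞) u) (t : ℝ) (ht : t ≠ 0) (x : E3) :
    gradient (fun x => t * u (t⁻¹ • x)) x = gradient u (t⁻¹ • x) := by
  set y := t⁻¹ • x with hy
  have hg : HasGradientAt u (gradient u y) y :=
    ((hu.differentiable (by simp)) y).hasGradientAt
  have hfd : HasFDerivAt u (InnerProductSpace.toDual ℝ E3 (gradient u y)) y :=
    hg.hasFDerivAt
  have hL : HasFDerivAt (fun z : E3 => t⁻¹ • z) (t⁻¹ • ContinuousLinearMap.id ℝ E3) x := by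
    exact (t⁻¹ • ContinuousLinearMap.id ℝ E3).hasFDerivAt (x := x)
  have hcomp := (hfd.comp x hL).const_mul t
  have heq : t • ((InnerProductSpace.toDual ℝ E3 (gradient u y)).comp
      (t⁻¹ • ContinuousLinearMap.id ℝ E3)) = InnerProductSpace.toDual ℝ E3 (gradient u y) := by
    ext v
    simp [real_inner_smul_right]
    field_simp
  rw [heq] at hcomp
  exact ((hasGradientAt_iff_hasFDerivAt).mpr hcomp).gradient

lemma int_scale (g : E3 → ℝ) (t : ℝ) (ht : 0 < t) :
    (∫ x : E3, g (t⁻¹ • x)) = t ^ 3 * ∫ x, g x := by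
  rw [Measure.integral_comp_smul volume g t⁻¹]
  have h3 : Module.finrank ℝ E3 = 3 := by simp
  rw [h3, smul_eq_mul]
  congr 1
  rw [← inv_pow, inv_inv, abs_of_pos (by positivity)]

lemma energyI_scale (a b p : ℝ) (u : E3 → ℝ) (hu : ContDiff ℝ (⊤ : ℕ∞) u)
    (hsupp : HasCompactSupport u) (t : ℝ) (ht : 0 < t) :
    energyI a b p (fun x => t * u (t⁻¹ • x)) =
      (1/2) * (t ^ 3 * ((a * ∫ x : E3, ‖gradient u x‖ ^ 2) + t ^ 2 * ∫ x : E3, (u x) ^ 2))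
        + (b/4) * (t ^ 3 * ∫ x : E3, ‖gradient u x‖ ^ 2) ^ 2
        - (1/(p+1)) * (t ^ (p+1) * (t ^ 3 * ∫ x : E3, |u x| ^ (p+1)))
        - (1/6) * (t ^ (6:ℕ) * (t ^ 3 * ∫ x : E3, |u x| ^ (6:ℕ))) := by
  have ht' : t ≠ 0 := ne_of_gt ht
  have hgc : Continuous (gradient u) := by
    have : Continuous (fderiv ℝ u) := hu.continuous_fderiv (by simp)
    exact (InnerProductSpace.toDual ℝ E3).symm.continuous.comp this
  have hgs : HasCompactSupport (gradient u) := by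
    have h1 : HasCompactSupport (fderiv ℝ u) := hsupp.fderiv (𝕜 := ℝ)
    exact h1.comp_left (by simp)
  have hIg : Integrable (fun x : E3 => a * ‖gradient u x‖ ^ 2) := by
    exact (continuous_const.mul (hgc.norm.pow 2)).integrable_of_hasCompactSupport
      (by have h := hgs.comp_left (g := fun v : E3 => a * ‖v‖ ^ 2) (by simp); exact h)
  have hIu : Integrable (fun x : E3 => t ^ 2 * (u x) ^ 2) := by
    exact (continuous_const.mul (hu.continuous.pow 2)).integrable_of_hasCompactSupport
      (by have h := hsupp.comp_left (g := fun s : ℝ => t ^ 2 * s ^ 2) (by simp); exact h)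
  unfold energyI
  have e1 : (∫ x : E3, (a * ‖gradient (fun x => t * u (t⁻¹ • x)) x‖ ^ 2
      + ((fun x => t * u (t⁻¹ • x)) x) ^ 2))
      = t ^ 3 * ∫ x : E3, (a * ‖gradient u x‖ ^ 2 + t ^ 2 * (u x) ^ 2) := by
    rw [← int_scale _ t ht]
    refine integral_congr_ae (Filter.Eventually.of_forall fun x => ?_)
    simp only [grad_scale u hu t ht']
    ring
  have e2 : (∫ x : E3, ‖gradient (fun x => t * u (t⁻¹ • x)) x‖ ^ 2)
      = t ^ 3 * ∫ x : E3, ‖gradient u x‖ ^ 2 := by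
    rw [← int_scale _ t ht]
    refine integral_congr_ae (Filter.Eventually.of_forall fun x => ?_)
    simp only [grad_scale u hu t ht']
  have e3 : (∫ x : E3, |(fun x => t * u (t⁻¹ • x)) x| ^ (p+1))
      = t ^ (p+1) * (t ^ 3 * ∫ x : E3, |u x| ^ (p+1)) := by
    rw [← int_scale (fun y => |u y| ^ (p+1)) t ht, ← integral_const_mul]
    refine integral_congr_ae (Filter.Eventually.of_forall fun x => ?_)
    simp only [abs_mul, abs_of_pos ht]
    rw [Real.mul_rpow (le_of_lt ht) (abs_nonneg _)]
  have e4 : (∫ x : E3, |(fun x => t * u (t⁻¹ • x)) x| ^ (6:ℕ))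
      = t ^ (6:ℕ) * (t ^ 3 * ∫ x : E3, |u x| ^ (6:ℕ)) := by
    rw [← int_scale (fun y => |u y| ^ (6:ℕ)) t ht, ← integral_const_mul]
    refine integral_congr_ae (Filter.Eventually.of_forall fun x => ?_)
    simp only [abs_mul, abs_of_pos ht]
    ring
  rw [e1, e2, e3, e4]
  have e5 : (∫ x : E3, (a * ‖gradient u x‖ ^ 2 + t ^ 2 * (u x) ^ 2))
      = (a * ∫ x : E3, ‖gradient u x‖ ^ 2) + t ^ 2 * ∫ x : E3, (u x) ^ 2 := by
    rw [integral_add hIg hIu, integral_const_mul _, integral_const_mul]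
  rw [e5]

/-- Lemma 2.2: for `u ≠ 0` smooth with compact support, `I(u_t) → −∞` as
`t → +∞` (where `u_t(x) = t·u(t⁻¹x)`); in particular `I` is not bounded from
below on smooth compactly supported functions. -/
theorem energyI_not_bounded_below
    (a b p : ℝ) (ha : 0 < a) (hb : 0 < b) (hp₁ : 2 < p) (hp₂ : p < 5)
    (u : EuclideanSpace ℝ (Fin 3) → ℝ)
    (hu : ContDiff ℝ (⊤ : ℕ∞) u) (hsupp : HasCompactSupport u) (hne : u ≠ 0) :
    Tendsto (fun t : ℝ => energyI a b p (fun x => t * u (t⁻¹ • x))) atTop atBot ∧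
      ¬ BddBelow (energyI a b p ''
        {v : EuclideanSpace ℝ (Fin 3) → ℝ | ContDiff ℝ (⊤ : ℕ∞) v ∧ HasCompactSupport v}) := by
  set A := ∫ x : E3, ‖gradient u x‖ ^ 2 with hAdef
  set B := ∫ x : E3, (u x) ^ 2 with hBdef
  set C := ∫ x : E3, |u x| ^ (p+1) with hCdef
  set D := ∫ x : E3, |u x| ^ (6:ℕ) with hDdef
  have hA0 : 0 ≤ A := integral_nonneg fun x => by positivity
  have hB0 : 0 ≤ B := integral_nonneg fun x => by positivity
  have hC0 : 0 ≤ C := integral_nonneg fun x => by positivity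
  have hD0 : 0 < D := by
    have hIc : Continuous (fun x : E3 => |u x| ^ (6:ℕ)) := hu.continuous.abs.pow 6
    have hIs : HasCompactSupport (fun x : E3 => |u x| ^ (6:ℕ)) :=
      hsupp.comp_left (g := fun s : ℝ => |s| ^ (6:ℕ)) (by simp)
    have hInt := hIc.integrable_of_hasCompactSupport (μ := volume) hIs
    rw [hDdef, integral_pos_iff_support_of_nonneg (fun x => by positivity) hInt]
    have hseq : Function.support (fun x : E3 => |u x| ^ (6:ℕ)) = Function.support u := by
      ext x
      simp [Function.mem_support, abs_eq_zero, pow_eq_zero_iff]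
    rw [hseq]
    have hopen : IsOpen (Function.support u) := by
      rw [Function.support_eq_preimage]
      exact isOpen_compl_singleton.preimage hu.continuous
    exact hopen.measure_pos volume (Function.support_nonempty_iff.mpr hne)
  set K := a/2 * A + 1/2 * B + b/4 * A^2 with hKdef
  have hb1 : ∀ t : ℝ, 1 ≤ t →
      energyI a b p (fun x => t * u (t⁻¹ • x)) ≤ t^6 * (K - D/6 * t^3) := by
    intro t ht1
    have ht0 : (0:ℝ) < t := lt_of_lt_of_le one_pos ht1
    rw [energyI_scale a b p u hu hsupp t ht0]
    have h36 : t^3 ≤ t^6 := pow_le_pow_right₀ (by linarith) (by norm_num)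
    have h56 : t^5 ≤ t^6 := pow_le_pow_right₀ (by linarith) (by norm_num)
    have hCterm : 0 ≤ (1/(p+1)) * (t ^ (p+1) * (t^3 * C)) := by
      have h1 : 0 ≤ t ^ (p+1) := Real.rpow_nonneg ht0.le _
      have h2 : (0:ℝ) < p + 1 := by linarith
      positivity
    nlinarith [mul_nonneg (mul_nonneg ha.le hA0) (sub_nonneg.mpr h36),
      mul_nonneg hB0 (sub_nonneg.mpr h56), sq_nonneg t, pow_nonneg ht0.le 3,
      pow_nonneg ht0.le 6]
  have hg : Tendsto (fun t : ℝ => K - D/6 * t^3) atTop atBot := by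
    have h1 : Tendsto (fun t : ℝ => D/6 * t^3) atTop atTop :=
      (tendsto_pow_atTop (by norm_num)).const_mul_atTop (by positivity)
    have h2 := tendsto_atBot_add_const_left atTop K (tendsto_neg_atTop_atBot.comp h1)
    simpa [sub_eq_add_neg, Function.comp] using h2
  have main1 : Tendsto (fun t : ℝ => energyI a b p (fun x => t * u (t⁻¹ • x))) atTop atBot := by
    apply tendsto_atBot_mono' atTop ?_ hg
    filter_upwards [eventually_ge_atTop (1:ℝ), hg.eventually_le_atBot 0] with t ht1 ht0
    calc energyI a b p (fun x => t * u (t⁻¹ • x)) ≤ t^6 * (K - D/6 * t^3) := hb1 t ht1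
      _ ≤ K - D/6 * t^3 := by
          have h6 : 1 ≤ t^6 := one_le_pow₀ ht1
          nlinarith [mul_nonneg (sub_nonneg.mpr h6) (neg_nonneg.mpr ht0)]
  refine ⟨main1, ?_⟩
  rintro ⟨m, hm⟩
  obtain ⟨t, hlt, ht1⟩ := ((main1.eventually_lt_atBot m).and (eventually_ge_atTop (1:ℝ))).exists
  have ht0 : (0:ℝ) < t := lt_of_lt_of_le one_pos ht1
  have hmem : (fun x : E3 => t * u (t⁻¹ • x)) ∈
      {v : EuclideanSpace ℝ (Fin 3) → ℝ | ContDiff ℝ (⊤ : ℕ∞) v ∧ HasCompactSupport v} := by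
    constructor
    · exact contDiff_const.mul (hu.comp (contDiff_const_smul t⁻¹))
    · exact (hsupp.comp_smul (inv_ne_zero ht0.ne')).mul_left
  have := hm (Set.mem_image_of_mem _ hmem)
  linarith
end

section
/- Fix a, b > 0 and p ∈ (2,5). Let u : ℝ³ → ℝ be smooth with compact support and not identically zero, and for t > 0 let u_t(x) = t·u(t⁻¹x). Then there exists a unique t̂ > 0 such that G(u_{t̂}) = 0; moreover I(u_{t̂}) = max over t > 0 of I(u_t). (Lemma 2.4) -/
open MeasureTheory

/-- The Nehari–Pohozaev functional
`G(u) = (3/2)a∫|∇u|² + (5/2)∫u² + (3/2)b(∫|∇u|²)² − ((p+4)/(p+1))∫|u|^(p+1)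
  − (3/2)∫|u|⁶` on `ℝ³`. -/
noncomputable def funcG (a b p : ℝ) (u : EuclideanSpace ℝ (Fin 3) → ℝ) : ℝ :=
  (3/2) * a * (∫ x : EuclideanSpace ℝ (Fin 3), ‖gradient u x‖ ^ 2)
    + (5/2) * (∫ x : EuclideanSpace ℝ (Fin 3), (u x) ^ 2)
    + (3/2) * b * (∫ x : EuclideanSpace ℝ (Fin 3), ‖gradient u x‖ ^ 2) ^ 2
    - ((p+4)/(p+1)) * (∫ x : EuclideanSpace ℝ (Fin 3), |u x| ^ (p+1))
    - (3/2) * (∫ x : EuclideanSpace ℝ (Fin 3), |u x| ^ (6:ℕ))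

local notation "E3" => EuclideanSpace ℝ (Fin 3)

open Real Set in

lemma key_calc (p c3 c5 c6 cp c9 : ℝ) (hp : 2 < p)
    (h3 : 0 ≤ c3) (h5 : 0 < c5) (h6 : 0 ≤ c6) (hcp : 0 ≤ cp) (h9 : 0 < c9) :
    ∃ T : ℝ, 0 < T ∧
      (3*c3*T^(3:ℕ) + 5*c5*T^(5:ℕ) + 6*c6*T^(6:ℕ) - (p+4)*cp*T^(p+4) - 9*c9*T^(9:ℕ) = 0) ∧
      (∀ t : ℝ, 0 < t →
        3*c3*t^(3:ℕ) + 5*c5*t^(5:ℕ) + 6*c6*t^(6:ℕ) - (p+4)*cp*t^(p+4) - 9*c9*t^(9:ℕ) = 0 → t = T) ∧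
      (∀ t : ℝ, 0 < t →
        c3*t^(3:ℕ) + c5*t^(5:ℕ) + c6*t^(6:ℕ) - cp*t^(p+4) - c9*t^(9:ℕ) ≤
        c3*T^(3:ℕ) + c5*T^(5:ℕ) + c6*T^(6:ℕ) - cp*T^(p+4) - c9*T^(9:ℕ)) := by
  have hp2 : (0:ℝ) < p - 2 := by linarith
  have hp4 : (0:ℝ) < p + 4 := by linarith
  set h : ℝ → ℝ := fun s => 3*c3*(s^(3:ℕ))⁻¹ + 5*c5*s⁻¹ + 6*c6 - (p+4)*cp*s^(p-2) - 9*c9*s^(3:ℕ)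
    with hh
  -- strict antitonicity
  have hanti : StrictAntiOn h (Set.Ioi 0) := by
    intro x hx y hy hxy
    simp only [Set.mem_Ioi] at hx hy
    have i1 : (y^(3:ℕ))⁻¹ ≤ (x^(3:ℕ))⁻¹ := by
      apply inv_anti₀ (by positivity)
      exact pow_le_pow_left₀ hx.le hxy.le 3
    have i2 : y⁻¹ < x⁻¹ := inv_strictAnti₀ hx hxy
    have i3 : x^(p-2) ≤ y^(p-2) := Real.rpow_le_rpow hx.le hxy.le hp2.le
    have i4 : x^(3:ℕ) < y^(3:ℕ) := by
      apply pow_lt_pow_left₀ hxy hx.le (by norm_num)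
    have j1 : 3*c3*(y^(3:ℕ))⁻¹ ≤ 3*c3*(x^(3:ℕ))⁻¹ :=
      mul_le_mul_of_nonneg_left i1 (by linarith)
    have j2 : 5*c5*y⁻¹ < 5*c5*x⁻¹ := mul_lt_mul_of_pos_left i2 (by linarith)
    have j3 : (p+4)*cp*x^(p-2) ≤ (p+4)*cp*y^(p-2) :=
      mul_le_mul_of_nonneg_left i3 (by positivity)
    have j4 : 9*c9*x^(3:ℕ) < 9*c9*y^(3:ℕ) := mul_lt_mul_of_pos_left i4 (by linarith)
    simp only [hh]
    linarith
  -- small point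
  set M := (p+4)*cp + 9*c9 with hM
  have hM0 : 0 < M := by positivity
  set s0 : ℝ := min 1 (5*c5/(2*M)) with hs0def
  have hs0 : 0 < s0 := lt_min one_pos (by positivity)
  have hs01 : s0 ≤ 1 := min_le_left _ _
  have hpos : 0 < h s0 := by
    have i1 : (5*c5/(2*M))⁻¹ ≤ s0⁻¹ := inv_anti₀ hs0 (min_le_right _ _)
    have i2 : 2*M ≤ 5*c5*s0⁻¹ := by
      have e : 5*c5*(5*c5/(2*M))⁻¹ = 2*M := by field_simp
      calc 2*M = 5*c5*(5*c5/(2*M))⁻¹ := e.symm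
        _ ≤ 5*c5*s0⁻¹ := mul_le_mul_of_nonneg_left i1 (by linarith)
    have i3 : s0^(p-2) ≤ 1 := Real.rpow_le_one hs0.le hs01 hp2.le
    have i4 : s0^(3:ℕ) ≤ 1 := pow_le_one₀ hs0.le hs01
    have i5 : (0:ℝ) ≤ 3*c3*(s0^(3:ℕ))⁻¹ := by positivity
    have i6 : (p+4)*cp*s0^(p-2) ≤ (p+4)*cp := by
      calc (p+4)*cp*s0^(p-2) ≤ (p+4)*cp*1 := mul_le_mul_of_nonneg_left i3 (by positivity)
        _ = (p+4)*cp := mul_one _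
    have i7 : 9*c9*s0^(3:ℕ) ≤ 9*c9 := by
      calc 9*c9*s0^(3:ℕ) ≤ 9*c9*1 := mul_le_mul_of_nonneg_left i4 (by linarith)
        _ = 9*c9 := mul_one _
    simp only [hh]
    linarith
  -- large point
  set N := 3*c3 + 5*c5 + 6*c6 with hN
  have hN0 : 0 ≤ N := by linarith
  set s1 : ℝ := max 1 (N/(9*c9) + 1) with hs1def
  have hs1b : (1:ℝ) ≤ s1 := le_max_left _ _
  have hs1 : 0 < s1 := lt_of_lt_of_le one_pos hs1b
  have hneg : h s1 < 0 := by
    have k0 : N/(9*c9) + 1 ≤ s1 := le_max_right _ _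
    have k1 : (s1^(3:ℕ))⁻¹ ≤ 1 := by
      rw [inv_le_one_iff₀]; right; exact one_le_pow₀ hs1b
    have k2 : s1⁻¹ ≤ 1 := by rw [inv_le_one_iff₀]; right; exact hs1b
    have k3 : (0:ℝ) ≤ (p+4)*cp*s1^(p-2) := by positivity
    have k4 : s1 ≤ s1^(3:ℕ) := le_self_pow₀ hs1b (by norm_num)
    have k5 : N + 9*c9 ≤ 9*c9*s1^(3:ℕ) := by
      have e : 9*c9*(N/(9*c9)+1) = N + 9*c9 := by field_simp
      calc N + 9*c9 = 9*c9*(N/(9*c9)+1) := e.symm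
        _ ≤ 9*c9*s1^(3:ℕ) := mul_le_mul_of_nonneg_left (k0.trans k4) (by linarith)
    have k6 : 3*c3*(s1^(3:ℕ))⁻¹ ≤ 3*c3 := by
      calc 3*c3*(s1^(3:ℕ))⁻¹ ≤ 3*c3*1 := mul_le_mul_of_nonneg_left k1 (by linarith)
        _ = 3*c3 := mul_one _
    have k7 : 5*c5*s1⁻¹ ≤ 5*c5 := by
      calc 5*c5*s1⁻¹ ≤ 5*c5*1 := mul_le_mul_of_nonneg_left k2 (by linarith)
        _ = 5*c5 := mul_one _
    simp only [hh]
    linarith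
  -- continuity of h on positive reals
  have hcont : ∀ x : ℝ, 0 < x → ContinuousAt h x := by
    intro x hx0
    have c1 : ContinuousAt (fun s : ℝ => (s^(3:ℕ))⁻¹) x :=
      (continuousAt_id.pow 3).inv₀ (pow_ne_zero 3 hx0.ne')
    have c2 : ContinuousAt (fun s : ℝ => s⁻¹) x := continuousAt_inv₀ hx0.ne'
    have c3' : ContinuousAt (fun s : ℝ => s^(p-2)) x :=
      Real.continuousAt_rpow_const x _ (Or.inl hx0.ne')
    have c4 : ContinuousAt (fun s : ℝ => s^(3:ℕ)) x := continuousAt_id.pow 3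
    simp only [hh]
    exact ((((c1.const_mul _).add (c2.const_mul _)).add continuousAt_const).sub
      (c3'.const_mul _)).sub (c4.const_mul _)
  have hs0s1 : s0 ≤ s1 := hs01.trans hs1b
  obtain ⟨T, hTmem, hT0⟩ :=
    intermediate_value_Icc' hs0s1
      (fun x hx => ((hcont x (lt_of_lt_of_le hs0 hx.1)).continuousWithinAt))
      (⟨hneg.le, hpos.le⟩ : (0:ℝ) ∈ Set.Icc (h s1) (h s0))
  have hTpos : 0 < T := lt_of_lt_of_le hs0 hTmem.1
  -- the g = s^6 * h s identity
  have hg : ∀ s : ℝ, 0 < s →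
      3*c3*s^(3:ℕ) + 5*c5*s^(5:ℕ) + 6*c6*s^(6:ℕ) - (p+4)*cp*s^(p+4) - 9*c9*s^(9:ℕ)
        = s^(6:ℕ) * h s := by
    intro s hs
    have hr : s^(p+4) = s^(6:ℕ) * s^(p-2) := by
      rw [← Real.rpow_natCast s 6, ← Real.rpow_add hs]
      congr 1
      ring
    simp only [hh]
    rw [hr]
    have hsne : s ≠ 0 := hs.ne'
    field_simp
  -- derivative of γ
  have hderiv : ∀ s : ℝ, 0 < s →
      HasDerivAt (fun t : ℝ => c3*t^(3:ℕ) + c5*t^(5:ℕ) + c6*t^(6:ℕ) - cp*t^(p+4) - c9*t^(9:ℕ))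
        (s^(5:ℕ) * h s) s := by
    intro s hs
    have d3 : HasDerivAt (fun t : ℝ => t^(3:ℕ)) (3*s^(2:ℕ)) s := by
      simpa using hasDerivAt_pow 3 s
    have d5 : HasDerivAt (fun t : ℝ => t^(5:ℕ)) (5*s^(4:ℕ)) s := by
      simpa using hasDerivAt_pow 5 s
    have d6 : HasDerivAt (fun t : ℝ => t^(6:ℕ)) (6*s^(5:ℕ)) s := by
      simpa using hasDerivAt_pow 6 s
    have d9 : HasDerivAt (fun t : ℝ => t^(9:ℕ)) (9*s^(8:ℕ)) s := by
      simpa using hasDerivAt_pow 9 s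
    have dr : HasDerivAt (fun t : ℝ => t^(p+4)) ((p+4)*s^(p+3)) s := by
      have := Real.hasDerivAt_rpow_const (x := s) (p := p+4) (Or.inl hs.ne')
      convert this using 2
      ring
    have dd := ((((d3.const_mul c3).add (d5.const_mul c5)).add (d6.const_mul c6)).sub
      (dr.const_mul cp)).sub (d9.const_mul c9)
    refine dd.congr_deriv ?_
    have hr : s^(p+3) = s^(5:ℕ) * s^(p-2) := by
      rw [← Real.rpow_natCast s 5, ← Real.rpow_add hs]
      congr 1
      ring
    simp only [hh]
    rw [hr]
    have hsne : s ≠ 0 := hs.ne'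
    field_simp
  refine ⟨T, hTpos, ?_, ?_, ?_⟩
  · rw [hg T hTpos, hT0, mul_zero]
  · intro t ht hgt
    rw [hg t ht] at hgt
    have ht0 : h t = 0 := by
      have : (t:ℝ)^(6:ℕ) ≠ 0 := by positivity
      exact (mul_eq_zero.mp hgt).resolve_left this
    exact hanti.injOn (Set.mem_Ioi.mpr ht) (Set.mem_Ioi.mpr hTpos) (ht0.trans hT0.symm)
  · intro t ht
    rcases lt_trichotomy t T with hlt | heq | hgt
    · have mono : StrictMonoOn
          (fun t : ℝ => c3*t^(3:ℕ) + c5*t^(5:ℕ) + c6*t^(6:ℕ) - cp*t^(p+4) - c9*t^(9:ℕ))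
          (Set.Icc t T) := by
        apply strictMonoOn_of_deriv_pos (convex_Icc t T)
        · intro x hx
          exact (hderiv x (lt_of_lt_of_le ht hx.1)).continuousAt.continuousWithinAt
        · intro x hx
          rw [interior_Icc] at hx
          have hx0 : 0 < x := ht.trans hx.1
          rw [(hderiv x hx0).deriv]
          have hhx : 0 < h x := by
            have := hanti (Set.mem_Ioi.mpr hx0) (Set.mem_Ioi.mpr hTpos) hx.2
            rw [hT0] at this
            exact this
          positivity
      exact mono.monotoneOn ⟨le_refl t, hlt.le⟩ ⟨hlt.le, le_refl T⟩ hlt.le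
    · rw [heq]
    · have anti : StrictAntiOn
          (fun t : ℝ => c3*t^(3:ℕ) + c5*t^(5:ℕ) + c6*t^(6:ℕ) - cp*t^(p+4) - c9*t^(9:ℕ))
          (Set.Icc T t) := by
        apply strictAntiOn_of_deriv_neg (convex_Icc T t)
        · intro x hx
          exact (hderiv x (lt_of_lt_of_le hTpos hx.1)).continuousAt.continuousWithinAt
        · intro x hx
          rw [interior_Icc] at hx
          have hx0 : 0 < x := hTpos.trans hx.1
          rw [(hderiv x hx0).deriv]
          have hhx : h x < 0 := by
            have := hanti (Set.mem_Ioi.mpr hTpos) (Set.mem_Ioi.mpr hx0) hx.1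
            rw [hT0] at this
            exact this
          have h5p : (0:ℝ) < x^(5:ℕ) := by positivity
          exact mul_neg_of_pos_of_neg h5p hhx
      exact anti.antitoneOn ⟨le_refl T, hgt.le⟩ ⟨hgt.le, le_refl t⟩ hgt.le

lemma gradient_dilation (u : E3 → ℝ) (hu : Differentiable ℝ u)
    {t : ℝ} (ht : 0 < t) (x : E3) :
    gradient (fun y => t * u (t⁻¹ • y)) x = gradient u (t⁻¹ • x) := by
  have hin : HasFDerivAt (fun y : E3 => t⁻¹ • y) (t⁻¹ • ContinuousLinearMap.id ℝ E3) x :=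
    (t⁻¹ • ContinuousLinearMap.id ℝ E3).hasFDerivAt
  have hcomp : HasFDerivAt (fun y : E3 => u (t⁻¹ • y))
      ((fderiv ℝ u (t⁻¹ • x)).comp (t⁻¹ • ContinuousLinearMap.id ℝ E3)) x :=
    (hu (t⁻¹ • x)).hasFDerivAt.comp x hin
  have hmul : HasFDerivAt (fun y : E3 => t * u (t⁻¹ • y))
      (t • ((fderiv ℝ u (t⁻¹ • x)).comp (t⁻¹ • ContinuousLinearMap.id ℝ E3))) x :=
    hcomp.const_mul t
  have heq : t • ((fderiv ℝ u (t⁻¹ • x)).comp (t⁻¹ • ContinuousLinearMap.id ℝ E3))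
      = fderiv ℝ u (t⁻¹ • x) := by
    ext v
    simp [smul_smul, mul_inv_cancel₀ ht.ne']
  rw [heq] at hmul
  unfold gradient
  rw [hmul.fderiv]

lemma integral_comp_inv_smul_E3 (f : E3 → ℝ) {t : ℝ} (ht : 0 < t) :
    ∫ x : E3, f (t⁻¹ • x) = t^(3:ℕ) * ∫ x : E3, f x := by
  rw [MeasureTheory.Measure.integral_comp_inv_smul volume f t]
  have : Module.finrank ℝ E3 = 3 := by simp
  rw [this, abs_of_pos (by positivity), smul_eq_mul]

/-- Lemma 2.4: for `u ≠ 0` smooth with compact support there is a unique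
`t̂ > 0` with `G(u_{t̂}) = 0`, and `I(u_{t̂}) = max_{t>0} I(u_t)`
(where `u_t(x) = t·u(t⁻¹x)`). -/
theorem exists_unique_dilation_on_nehari_pohozaev_manifold
    (a b p : ℝ) (ha : 0 < a) (hb : 0 < b) (hp₁ : 2 < p) (hp₂ : p < 5)
    (u : EuclideanSpace ℝ (Fin 3) → ℝ)
    (hu : ContDiff ℝ (⊤ : ℕ∞) u) (hsupp : HasCompactSupport u) (hne : u ≠ 0) :
    ∃ that : ℝ, 0 < that ∧ funcG a b p (fun x => that * u (that⁻¹ • x)) = 0 ∧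
      (∀ t : ℝ, 0 < t → funcG a b p (fun x => t * u (t⁻¹ • x)) = 0 → t = that) ∧
      (∀ t : ℝ, 0 < t →
        energyI a b p (fun x => t * u (t⁻¹ • x)) ≤
          energyI a b p (fun x => that * u (that⁻¹ • x))) := by
  have hucont : Continuous u := hu.continuous
  have hud : Differentiable ℝ u := hu.differentiable (by simp)
  have hgc : Continuous (gradient u) := by
    unfold gradient
    exact (InnerProductSpace.toDual ℝ E3).symm.continuous.comp (hu.continuous_fderiv (by simp))
  have hgcs : HasCompactSupport (gradient u) := by
    have := (hsupp.fderiv ℝ).comp_left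
      (g := fun L : E3 →L[ℝ] ℝ => (InnerProductSpace.toDual ℝ E3).symm L) (by simp)
    exact this
  have int_gradsq : Integrable (fun x : E3 => ‖gradient u x‖ ^ 2) :=
    Continuous.integrable_of_hasCompactSupport (by fun_prop)
      (hgcs.comp_left (g := fun v : E3 => ‖v‖ ^ 2) (by simp))
  have int_sq : Integrable (fun x : E3 => (u x) ^ 2) :=
    Continuous.integrable_of_hasCompactSupport (by fun_prop)
      (hsupp.comp_left (g := fun r : ℝ => r ^ 2) (by simp))
  have hp1 : (0:ℝ) < p + 1 := by linarith
  have int_p : Integrable (fun x : E3 => |u x| ^ (p+1)) := by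
    apply (hucont.abs.rpow_const (fun x => Or.inr hp1.le)).integrable_of_hasCompactSupport
    exact hsupp.comp_left (g := fun r : ℝ => |r| ^ (p+1)) (by simp [Real.zero_rpow hp1.ne'])
  have int_6 : Integrable (fun x : E3 => |u x| ^ (6:ℕ)) :=
    Continuous.integrable_of_hasCompactSupport (by fun_prop)
      (hsupp.comp_left (g := fun r : ℝ => |r| ^ (6:ℕ)) (by simp))
  obtain ⟨x0, hx0⟩ := Function.ne_iff.mp hne
  simp only [Pi.zero_apply] at hx0
  set A := ∫ x : E3, ‖gradient u x‖ ^ 2 with hAdef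
  set B := ∫ x : E3, (u x) ^ 2 with hBdef
  set C := ∫ x : E3, |u x| ^ (p+1) with hCdef
  set D := ∫ x : E3, |u x| ^ (6:ℕ) with hDdef
  have hB : 0 < B := by
    rw [hBdef, integral_pos_iff_support_of_nonneg (fun x => sq_nonneg _) int_sq]
    have hs : Function.support (fun x : E3 => (u x) ^ 2) = Function.support u := by
      ext x; simp [pow_eq_zero_iff]
    rw [hs]
    exact (hucont.isOpen_support).measure_pos volume ⟨x0, hx0⟩
  have hD : 0 < D := by
    rw [hDdef, integral_pos_iff_support_of_nonneg (fun x => by positivity) int_6]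
    have hs : Function.support (fun x : E3 => |u x| ^ (6:ℕ)) = Function.support u := by
      ext x; simp [pow_eq_zero_iff, abs_eq_zero]
    rw [hs]
    exact (hucont.isOpen_support).measure_pos volume ⟨x0, hx0⟩
  have hA : 0 ≤ A := integral_nonneg fun x => by positivity
  have hC : 0 ≤ C := integral_nonneg fun x => by positivity
  -- scaling identities
  have S2 : ∀ t : ℝ, 0 < t →
      (∫ x : E3, ‖gradient (fun y => t * u (t⁻¹ • y)) x‖ ^ 2) = t^(3:ℕ) * A := by
    intro t ht
    calc ∫ x : E3, ‖gradient (fun y => t * u (t⁻¹ • y)) x‖ ^ 2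
        = ∫ x : E3, ‖gradient u (t⁻¹ • x)‖ ^ 2 := by
          simp only [gradient_dilation u hud ht]
      _ = t^(3:ℕ) * A := integral_comp_inv_smul_E3 (fun y => ‖gradient u y‖ ^ 2) ht
  have S1 : ∀ t : ℝ, 0 < t →
      (∫ x : E3, (a * ‖gradient (fun y => t * u (t⁻¹ • y)) x‖ ^ 2 + (t * u (t⁻¹ • x)) ^ 2))
        = t^(3:ℕ) * (a * A + t^(2:ℕ) * B) := by
    intro t ht
    calc ∫ x : E3, (a * ‖gradient (fun y => t * u (t⁻¹ • y)) x‖ ^ 2 + (t * u (t⁻¹ • x)) ^ 2)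
        = ∫ x : E3, (a * ‖gradient u (t⁻¹ • x)‖ ^ 2 + t^(2:ℕ) * (u (t⁻¹ • x)) ^ 2) := by
          simp only [gradient_dilation u hud ht, mul_pow]
      _ = t^(3:ℕ) * ∫ x : E3, (a * ‖gradient u x‖ ^ 2 + t^(2:ℕ) * (u x) ^ 2) :=
          integral_comp_inv_smul_E3 (fun y => a * ‖gradient u y‖ ^ 2 + t^(2:ℕ) * (u y) ^ 2) ht
      _ = t^(3:ℕ) * (a * A + t^(2:ℕ) * B) := by
          rw [integral_add (int_gradsq.const_mul a) (int_sq.const_mul _), integral_const_mul,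
            integral_const_mul]
  have Ssq : ∀ t : ℝ, 0 < t → (∫ x : E3, (t * u (t⁻¹ • x)) ^ 2) = t^(5:ℕ) * B := by
    intro t ht
    calc ∫ x : E3, (t * u (t⁻¹ • x)) ^ 2
        = ∫ x : E3, t^(2:ℕ) * (u (t⁻¹ • x)) ^ 2 := by simp only [mul_pow]
      _ = t^(2:ℕ) * ∫ x : E3, (u (t⁻¹ • x)) ^ 2 := integral_const_mul _ _
      _ = t^(2:ℕ) * (t^(3:ℕ) * B) := by
          congr 1
          exact integral_comp_inv_smul_E3 (fun y => (u y) ^ 2) ht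
      _ = t^(5:ℕ) * B := by ring
  have S3 : ∀ t : ℝ, 0 < t →
      (∫ x : E3, |t * u (t⁻¹ • x)| ^ (p+1)) = t^(p+4) * C := by
    intro t ht
    calc ∫ x : E3, |t * u (t⁻¹ • x)| ^ (p+1)
        = ∫ x : E3, t^(p+1) * |u (t⁻¹ • x)| ^ (p+1) := by
          congr 1
          funext x
          rw [abs_mul, abs_of_pos ht, Real.mul_rpow ht.le (abs_nonneg _)]
      _ = t^(p+1) * ∫ x : E3, |u (t⁻¹ • x)| ^ (p+1) := integral_const_mul _ _
      _ = t^(p+1) * (t^(3:ℕ) * C) := by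
          congr 1
          exact integral_comp_inv_smul_E3 (fun y => |u y| ^ (p+1)) ht
      _ = t^(p+4) * C := by
          rw [← mul_assoc]
          congr 1
          rw [← Real.rpow_natCast t 3, ← Real.rpow_add ht]
          congr 1
          ring
  have S4 : ∀ t : ℝ, 0 < t →
      (∫ x : E3, |t * u (t⁻¹ • x)| ^ (6:ℕ)) = t^(9:ℕ) * D := by
    intro t ht
    calc ∫ x : E3, |t * u (t⁻¹ • x)| ^ (6:ℕ)
        = ∫ x : E3, t^(6:ℕ) * |u (t⁻¹ • x)| ^ (6:ℕ) := by
          congr 1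
          funext x
          rw [abs_mul, abs_of_pos ht, mul_pow]
      _ = t^(6:ℕ) * ∫ x : E3, |u (t⁻¹ • x)| ^ (6:ℕ) := integral_const_mul _ _
      _ = t^(6:ℕ) * (t^(3:ℕ) * D) := by
          congr 1
          exact integral_comp_inv_smul_E3 (fun y => |u y| ^ (6:ℕ)) ht
      _ = t^(9:ℕ) * D := by ring
  have hI : ∀ t : ℝ, 0 < t → energyI a b p (fun x => t * u (t⁻¹ • x)) =
      (a*A/2)*t^(3:ℕ) + (B/2)*t^(5:ℕ) + (b*A^2/4)*t^(6:ℕ)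
        - (C/(p+1))*t^(p+4) - (D/6)*t^(9:ℕ) := by
    intro t ht
    simp only [energyI]
    rw [S1 t ht, S2 t ht, S3 t ht, S4 t ht]
    field_simp
  have hG : ∀ t : ℝ, 0 < t → funcG a b p (fun x => t * u (t⁻¹ • x)) =
      3*(a*A/2)*t^(3:ℕ) + 5*(B/2)*t^(5:ℕ) + 6*(b*A^2/4)*t^(6:ℕ)
        - (p+4)*(C/(p+1))*t^(p+4) - 9*(D/6)*t^(9:ℕ) := by
    intro t ht
    simp only [funcG]
    rw [S2 t ht, Ssq t ht, S3 t ht, S4 t ht]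
    field_simp
    ring
  obtain ⟨T, hTpos, hTzero, huniq, hmax⟩ :=
    key_calc p (a*A/2) (B/2) (b*A^2/4) (C/(p+1)) (D/6) hp₁
      (by positivity) (by positivity) (by positivity)
      (div_nonneg hC hp1.le) (by positivity)
  refine ⟨T, hTpos, ?_, ?_, ?_⟩
  · rw [hG T hTpos]
    exact hTzero
  · intro t ht h0
    exact huniq t ht (by rw [← hG t ht]; exact h0)
  · intro t ht
    rw [hI t ht, hI T hTpos]
    exact hmax t ht
end

section
/- Fix a, b > 0 and p ∈ (2,5). If u : ℝ³ → ℝ is smooth with compact support and G(u) = 0, then (p+4)·I(u) ≥ ((p−1)/2)·∫_{ℝ³}(a|∇u|² + u²). (Inequality (2.6), Step 2 of the proof of Lemma 2.5.) -/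
open MeasureTheory

/-- Inequality (2.6), Step 2 of the proof of Lemma 2.5: if `G(u) = 0` then
`(p+4)·I(u) ≥ ((p−1)/2)·∫(a|∇u|² + u²)`. -/
theorem energyI_lower_bound_on_manifold
    (a b p : ℝ) (ha : 0 < a) (hb : 0 < b) (hp₁ : 2 < p) (hp₂ : p < 5)
    (u : EuclideanSpace ℝ (Fin 3) → ℝ)
    (hu : ContDiff ℝ (⊤ : ℕ∞) u) (hsupp : HasCompactSupport u)
    (hG : funcG a b p u = 0) :
    (p + 4) * energyI a b p u ≥
      ((p - 1)/2) *
        ∫ x : EuclideanSpace ℝ (Fin 3), (a * ‖gradient u x‖ ^ 2 + (u x) ^ 2) := by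
  set T := ∫ x : EuclideanSpace ℝ (Fin 3), ‖gradient u x‖ ^ 2 with hT
  set B := ∫ x : EuclideanSpace ℝ (Fin 3), (u x) ^ 2 with hB
  set P := ∫ x : EuclideanSpace ℝ (Fin 3), |u x| ^ (p+1) with hP
  set S := ∫ x : EuclideanSpace ℝ (Fin 3), |u x| ^ (6:ℕ) with hS
  have hgradc : Continuous (gradient u) := by
    have : Continuous (fderiv ℝ u) := hu.continuous_fderiv (by simp)
    exact ((InnerProductSpace.toDual ℝ _).symm.continuous).comp this
  have hgradsupp : HasCompactSupport (gradient u) := by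
    have h1 : HasCompactSupport (fderiv ℝ u) := hsupp.fderiv ℝ
    exact h1.comp_left (map_zero _)
  have hTint : Integrable (fun x : EuclideanSpace ℝ (Fin 3) => ‖gradient u x‖ ^ 2) := by
    exact ((hgradc.norm.pow 2)).integrable_of_hasCompactSupport
      (by have h := HasCompactSupport.comp_left (g:=fun r:ℝ => r^2) hgradsupp.norm (by simp); exact h)
  have hBint : Integrable (fun x : EuclideanSpace ℝ (Fin 3) => (u x) ^ 2) := by
    exact (hu.continuous.pow 2).integrable_of_hasCompactSupport (by have h := HasCompactSupport.comp_left (g:=fun r:ℝ => r^2) hsupp (by simp); exact h)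
  have hsplit : (∫ x : EuclideanSpace ℝ (Fin 3), (a * ‖gradient u x‖ ^ 2 + (u x) ^ 2))
      = a * T + B := by
    rw [integral_add (hTint.const_mul a) hBint, integral_const_mul]
  have hTnn : 0 ≤ T := integral_nonneg fun x => by positivity
  have hBnn : 0 ≤ B := integral_nonneg fun x => by positivity
  have hSnn : 0 ≤ S := integral_nonneg fun x => by positivity
  have key : (p + 4) * energyI a b p u - funcG a b p u
      = (p+1)/2 * (a*T) + (p-1)/2 * B + (p-2)/4 * (b*T^2) + (5-p)/6 * S := by
    simp only [energyI, funcG, hsplit]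
    ring
  rw [hsplit]
  nlinarith [mul_nonneg ha.le hTnn, mul_nonneg hb.le (mul_self_nonneg T)]
end

section
/- Let p, ρ ∈ ℝ with p ≠ −1. Let B be the 4×4 real matrix with rows: row 1 = (1/2, 1/2, 1/4, −1/(p+1)); row 2 = (3/2, 5/2, 3/2, −(p+4)/(p+1)); row 3 = (3ρ−1, 5ρ−1, 6ρ−1, −((p+4)ρ−1)); row 4 = ((3ρ−1)/2, 3(5ρ−1)/2, (6ρ−1)/2, −3((p+4)ρ−1)/(p+1)). Then det B = ρ(p−1)(2p−1−9pρ)/(8(p+1)). (Determinant computation in Step 4 of the proof of Lemma 2.5.) -/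
set_option maxHeartbeats 1000000

lemma det_fin_four' {R : Type*} [CommRing R]
    (a b c d e f g h i j k l m n o q : R) :
    Matrix.det !![a,b,c,d;e,f,g,h;i,j,k,l;m,n,o,q] =
      a*f*k*q - a*f*l*o - a*g*j*q + a*g*l*n + a*h*j*o - a*h*k*n
      - b*e*k*q + b*e*l*o + b*g*i*q - b*g*l*m - b*h*i*o + b*h*k*m
      + c*e*j*q - c*e*l*n - c*f*i*q + c*f*l*m + c*h*i*n - c*h*j*m
      - d*e*j*o + d*e*k*n + d*f*i*o - d*f*k*m - d*g*i*n + d*g*j*m := by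
  simp [Matrix.det_succ_row_zero, Fin.sum_univ_succ, Fin.succAbove,
    Matrix.submatrix_apply, show ((2:Fin 3).castSucc : Fin 4) = 2 by decide]
  ring

/-- Determinant computation in Step 4 of the proof of Lemma 2.5: the
coefficient matrix `B` of the linear system (2.8) has
`det B = ρ(p−1)(2p−1−9pρ)/(8(p+1))`. -/
theorem det_coefficient_matrix (p ρ : ℝ) (hp : p ≠ -1) :
    Matrix.det
      (!![(1:ℝ)/2,      1/2,            1/4,          -(1/(p+1));
          3/2,           5/2,            3/2,          -((p+4)/(p+1));
          3*ρ-1,         5*ρ-1,          6*ρ-1,        -((p+4)*ρ-1);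
          (3*ρ-1)/2,     3*(5*ρ-1)/2,    (6*ρ-1)/2,    -(3*((p+4)*ρ-1)/(p+1))]) =
      ρ * (p - 1) * (2*p - 1 - 9*p*ρ) / (8 * (p + 1)) := by
  have h : p + 1 ≠ 0 := by intro h; apply hp; linarith
  rw [det_fin_four']
  field_simp
  ring
end

section
/- Let p ∈ (2,5), l > 0, ξ > 0 and ρ ∈ ℝ. Suppose (α, β, γ, θ) ∈ ℝ⁴ with α > 0, β > 0, γ > 0, θ > 0 satisfies the linear system (2.8): (1/2)α + (1/2)β + (1/4)γ − (1/(p+1))θ = l + (1/6)ξ; (3/2)α + (5/2)β + (3/2)γ − ((p+4)/(p+1))θ = (3/2)ξ; (3ρ−1)α + (5ρ−1)β + (6ρ−1)γ − ((p+4)ρ−1)θ = (9ρ−1)ξ; ((3ρ−1)/2)α + (3(5ρ−1)/2)β + ((6ρ−1)/2)γ − (3((p+4)ρ−1)/(p+1))θ = ((9ρ−1)/2)ξ. Then ρ = 0. (Conclusion of Step 4 of the proof of Lemma 2.5: the Lagrange multiplier must vanish, so every critical point of I restricted to M is a critical point of I.) -/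
set_option maxHeartbeats 1000000


/-- Conclusion of Step 4 of the proof of Lemma 2.5: if `(α,β,γ,θ)` with all
entries positive solves the system (2.8) with `l > 0`, `ξ > 0`, then the
Lagrange multiplier `ρ` must vanish. -/
theorem lagrange_multiplier_vanishes
    (p l ξ ρ α β γ θ : ℝ) (hp₁ : 2 < p) (hp₂ : p < 5)
    (hl : 0 < l) (hξ : 0 < ξ)
    (hα : 0 < α) (hβ : 0 < β) (hγ : 0 < γ) (hθ : 0 < θ)
    (e₁ : (1/2)*α + (1/2)*β + (1/4)*γ - (1/(p+1))*θ = l + (1/6)*ξ)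
    (e₂ : (3/2)*α + (5/2)*β + (3/2)*γ - ((p+4)/(p+1))*θ = (3/2)*ξ)
    (e₃ : (3*ρ-1)*α + (5*ρ-1)*β + (6*ρ-1)*γ - ((p+4)*ρ-1)*θ = (9*ρ-1)*ξ)
    (e₄ : ((3*ρ-1)/2)*α + (3*(5*ρ-1)/2)*β + ((6*ρ-1)/2)*γ
            - (3*((p+4)*ρ-1)/(p+1))*θ = ((9*ρ-1)/2)*ξ) :
    ρ = 0 := by
  have hp0 : p + 1 ≠ 0 := by positivity
  -- cleared (denominator-free) versions of the equations
  have E1 : 2*(p+1)*α + 2*(p+1)*β + (p+1)*γ - 4*θ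
      = 4*(p+1)*l + (2/3)*(p+1)*ξ := by
    field_simp at e₁; linarith
  have E2 : 3*(p+1)*α + 5*(p+1)*β + 3*(p+1)*γ - 2*(p+4)*θ
      = 3*(p+1)*ξ := by
    field_simp at e₂; linarith
  have E3 : (p+1)*(3*ρ-1)*α + (p+1)*(5*ρ-1)*β + (p+1)*(6*ρ-1)*γ
      - (p+1)*((p+4)*ρ-1)*θ = (p+1)*(9*ρ-1)*ξ := by
    linear_combination (p+1)*e₃
  have E4 : (p+1)*(3*ρ-1)*α + 3*(p+1)*(5*ρ-1)*β + (p+1)*(6*ρ-1)*γ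
      - 6*((p+4)*ρ-1)*θ = (p+1)*(9*ρ-1)*ξ := by
    field_simp at e₄; linarith
  have keyθ : ρ*((p-1)*(9*p*ρ-(2*p-1))*θ)
      = ρ*(-6*(5*ρ-1)*(p+1)*(6*l+ξ)) := by
    linear_combination (-9*ρ*(5*ρ-1))*E1 + (1-14*ρ+45*ρ^2)*E2
      + (2-9*ρ)*E3 + (1-6*ρ)*E4
  have keyβ : ρ*((p-1)*(9*p*ρ-(2*p-1))*(p+1)*β)
      = ρ*(3*(p+1)*(5-p)*(1-(p+4)*ρ)*(6*l+ξ)) := by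
    linear_combination (-(9/2)*ρ*(p-5)*(1-(p+4)*ρ))*E1
      + (-(1/2)*((p-5)-ρ*(p^2+8*p-65)+9*ρ^2*(p-5)*(p+4)))*E2
      + ((5-p)-18*ρ)*E3 + (-(1/2)*((p-5)-3*ρ*(p^2-p-8)))*E4
  by_contra hρ
  have A := mul_left_cancel₀ hρ keyθ
  have B := mul_left_cancel₀ hρ keyβ
  clear keyθ keyβ E1 E2 E3 E4 e₁ e₂ e₃ e₄
  have hW : 0 < 6*l + ξ := by linarith
  have hW2 : 0 < (p+1)*(6*l+ξ) := by positivity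
  rcases lt_trichotomy ((p-1)*(9*p*ρ-(2*p-1))) 0 with hK | hK | hK
  · -- K < 0
    have h1 : (p-1)*(9*p*ρ-(2*p-1))*θ < 0 := mul_neg_of_neg_of_pos hK hθ
    rw [A] at h1
    have h5 : 0 < 5*ρ - 1 := by nlinarith [hW2, h1]
    have h7 : 0 < 9*p*ρ-(2*p-1) := by
      nlinarith [mul_pos (show (0:ℝ) < 9*p by linarith) h5]
    nlinarith [mul_pos (show (0:ℝ) < p-1 by linarith) h7]
  · -- K = 0
    rw [hK, zero_mul] at A
    have h5 : 5*ρ - 1 = 0 := by nlinarith [hW2, A]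
    have hρ5 : ρ = 1/5 := by linarith
    rw [hρ5] at hK
    nlinarith [mul_pos (show (0:ℝ) < p-1 by linarith)
      (show (0:ℝ) < 5-p by linarith)]
  · -- K > 0
    have h1 : 0 < (p-1)*(9*p*ρ-(2*p-1))*θ := mul_pos hK hθ
    rw [A] at h1
    have h5 : 5*ρ - 1 < 0 := by nlinarith [hW2, h1]
    have h2 : 0 < (p-1)*(9*p*ρ-(2*p-1))*(p+1)*β :=
      mul_pos (mul_pos hK (show (0:ℝ) < p+1 by linarith)) hβ
    rw [B] at h2
    have hP : 0 < 3*(p+1)*(5-p)*(6*l+ξ) := by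
      have h5p : (0:ℝ) < 5 - p := by linarith
      positivity
    have h6 : 0 < 1 - (p+4)*ρ := by nlinarith [hP, h2]
    have h7 : 0 < 9*p*ρ-(2*p-1) := by
      nlinarith [hK, mul_pos (show (0:ℝ) < p-1 by linarith) hK]
    nlinarith [mul_pos (show (0:ℝ) < p+4 by linarith) h7,
      mul_pos (show (0:ℝ) < 9*p by linarith) h6,
      mul_pos (show (0:ℝ) < p-2 by linarith) (show (0:ℝ) < p+1 by linarith)]
end
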